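/- Let d ≥ 1 and M > 0, let u_{0M}(x) = (4π)^{−(d−1)/2} χ_{[M,M+1]}(x₁) e^{−|x'|²/4}, and let u_M(t,x) = (4πt)^{−d/2} ∫_{ℝ^d} e^{−|x−y|²/(4t)} u_{0M}(y) dy be the corresponding heat solution. Let x₀ = (1, 0, …, 0) ∈ ℝ^d. Then for every t > 0, u_M(t, x₀) ≥ (1/2) e^{(M − 1/4)/(4t)} · u_M(t, 0). -/

import Mathlib

open Real MeasureTheory

/-- The initial datum `u_{0M}(x) = (4π)^{-(d-1)/2} χ_{[M,M+1]}(x₁) e^{-|x'|²/4}`, where a point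
of `ℝ^d` (with `d = k + 1`) is written as `x = (x₁, x') ∈ ℝ × ℝ^k`. -/
noncomputable def gaussianSlabDatum (k : ℕ) (M : ℝ) (x : ℝ × EuclideanSpace ℝ (Fin k)) : ℝ :=
  (4 * Real.pi) ^ (-(k : ℝ) / 2) * (Set.indicator (Set.Icc M (M + 1)) (fun _ => 1) x.1) *
    Real.exp (-‖x.2‖ ^ 2 / 4)

/-- The heat solution on `ℝ^d = ℝ × ℝ^k` (so `d = k + 1`) with initial datum `u₀`, given by
convolution with the Gaussian heat kernel; the Euclidean norm is written out explicitly as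
`|x - y|² = (x₁ - y₁)² + |x' - y'|²`. -/
noncomputable def heatSolutionProd (k : ℕ) (u₀ : ℝ × EuclideanSpace ℝ (Fin k) → ℝ)
    (t : ℝ) (x : ℝ × EuclideanSpace ℝ (Fin k)) : ℝ :=
  (4 * Real.pi * t) ^ (-((k : ℝ) + 1) / 2) *
    ∫ y : ℝ × EuclideanSpace ℝ (Fin k),
      Real.exp (-((x.1 - y.1) ^ 2 + ‖x.2 - y.2‖ ^ 2) / (4 * t)) * u₀ y

/-! The datum is a product, so along the axis `x' = 0` the heat solution is a positive constant
times the one-dimensional integral `∫_M^{M+1} e^{-(x₁-y)²/(4t)} dy`, and the theorem reduces to a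
comparison of two such integrals. Shifting by `1/2` multiplies the Gaussian at `y ≥ M` by at least
`e^{(M-1/4)/(4t)}`, and since the Gaussian decreases on `[M, M+1]`, the left half of that interval
carries at least half of its mass. -/

open Set intervalIntegral

theorem AntitoneOn.integral_le_two_mul_integral_left_half {f : ℝ → ℝ} {a b : ℝ} (hab : a ≤ b)
    (hf : AntitoneOn f (Icc a b)) :
    ∫ x in a..b, f x ≤ 2 * ∫ x in a..(a + b) / 2, f x := by
  set m := (a + b) / 2 with hm
  have hint : ∀ {c d}, c ∈ Icc a b → d ∈ Icc a b → IntervalIntegrable f volume c d :=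
    fun hc hd => (hf.mono (uIcc_subset_Icc hc hd)).intervalIntegrable
  have ha : a ∈ Icc a b := ⟨le_rfl, hab⟩
  have hmem : m ∈ Icc a b := ⟨by linarith, by linarith⟩
  have hb : b ∈ Icc a b := ⟨hab, le_rfl⟩
  have right_le_left : ∫ x in m..b, f x ≤ ∫ x in a..m, f x := by
    have hshift : ∫ x in a..m, f (x + (m - a)) = ∫ x in m..b, f x := by
      rw [integral_comp_add_right]
      congr 1 <;> linarith
    rw [← hshift]
    refine integral_mono_on hmem.1 ?_ (hint ha hmem) fun x hx => ?_
    · convert (hint hmem hb).comp_add_right (m - a) using 1 <;> linarith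
    · exact hf ⟨hx.1, hx.2.trans hmem.2⟩ ⟨by linarith [hx.1], by linarith [hx.2]⟩
        (by linarith [hmem.1])
  rw [← integral_add_adjacent_intervals (hint ha hmem) (hint hmem hb)]
  linarith

theorem antitoneOn_exp_neg_sq_div {s : ℝ} (hs : 0 < s) :
    AntitoneOn (fun z : ℝ => Real.exp (-z ^ 2 / s)) (Ici 0) := by
  intro y hy z _ hyz
  exact Real.exp_le_exp.2 <| div_le_div_of_nonneg_right (neg_le_neg <| by gcongr) hs.le

theorem exp_mul_exp_neg_sq_le_exp_neg_sub_sq {t c M y : ℝ} (ht : 0 < t) (hc : 0 ≤ c)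
    (hy : M ≤ y) :
    Real.exp (c * (2 * M - c) / (4 * t)) * Real.exp (-y ^ 2 / (4 * t)) ≤
      Real.exp (-(y - c) ^ 2 / (4 * t)) := by
  rw [← Real.exp_add, ← add_div]
  gcongr
  nlinarith

theorem half_exp_mul_integral_gaussian_le_integral_shift {t M : ℝ} (ht : 0 < t) (hM : 0 ≤ M) :
    (1 / 2) * Real.exp ((M - 1 / 4) / (4 * t)) * ∫ y in M..(M + 1), Real.exp (-y ^ 2 / (4 * t)) ≤
      ∫ y in M..(M + 1), Real.exp (-(1 - y) ^ 2 / (4 * t)) := by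
  set F : ℝ → ℝ := fun z => Real.exp (-z ^ 2 / (4 * t))
  have hF : Continuous F := by fun_prop
  have hE : (M - 1 / 4) / (4 * t) = 1 / 2 * (2 * M - 1 / 2) / (4 * t) := by ring
  have halve : ∫ y in M..(M + 1), F y ≤ 2 * ∫ y in M..(M + 1 / 2), F y := by
    have hanti : AntitoneOn F (Icc M (M + 1)) :=
      (antitoneOn_exp_neg_sq_div (by positivity)).mono fun y hy => hM.trans hy.1
    convert hanti.integral_le_two_mul_integral_left_half (by linarith) using 3
    ring
  have shift : Real.exp ((M - 1 / 4) / (4 * t)) * ∫ y in M..(M + 1 / 2), F y ≤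
      ∫ y in M..(M + 1 / 2), F (y - 1 / 2) := by
    rw [← intervalIntegral.integral_const_mul]
    refine integral_mono_on (by linarith) ((hF.const_mul _).intervalIntegrable _ _)
      ((hF.comp (continuous_sub_right _)).intervalIntegrable _ _) fun y hy => ?_
    rw [hE]
    exact exp_mul_exp_neg_sq_le_exp_neg_sub_sq ht (by norm_num) hy.1
  calc (1 / 2) * Real.exp ((M - 1 / 4) / (4 * t)) * ∫ y in M..(M + 1), F y
      ≤ Real.exp ((M - 1 / 4) / (4 * t)) * ∫ y in M..(M + 1 / 2), F y := by
        nlinarith [Real.exp_pos ((M - 1 / 4) / (4 * t))]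
    _ ≤ ∫ y in M..(M + 1 / 2), F (y - 1 / 2) := shift
    _ = ∫ z in (M - 1 / 2)..M, F z := by rw [integral_comp_sub_right]; norm_num
    _ ≤ ∫ z in (M - 1)..M, F z :=
        integral_mono_interval (by linarith) (by linarith) le_rfl
          (ae_of_all _ fun z => (Real.exp_pos _).le) (hF.intervalIntegrable _ _)
    _ = ∫ y in M..(M + 1), F (y - 1) := by rw [integral_comp_sub_right]; norm_num
    _ = ∫ y in M..(M + 1), Real.exp (-(1 - y) ^ 2 / (4 * t)) := by
        simp only [F, ← neg_sub _ (1 : ℝ), neg_sq]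

theorem heatSolutionProd_gaussianSlabDatum_axis (k : ℕ) (M t x₁ : ℝ) :
    heatSolutionProd k (gaussianSlabDatum k M) t (x₁, 0) =
      (4 * π * t) ^ (-((k : ℝ) + 1) / 2) * (4 * π) ^ (-(k : ℝ) / 2) *
        (∫ z : EuclideanSpace ℝ (Fin k), Real.exp (-‖z‖ ^ 2 / (4 * t)) * Real.exp (-‖z‖ ^ 2 / 4)) *
        ∫ y in M..(M + 1), Real.exp (-(x₁ - y) ^ 2 / (4 * t)) := by
  set f : ℝ → ℝ := (Icc M (M + 1)).indicator fun y => Real.exp (-(x₁ - y) ^ 2 / (4 * t))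
  set g : EuclideanSpace ℝ (Fin k) → ℝ :=
    fun z => Real.exp (-‖z‖ ^ 2 / (4 * t)) * Real.exp (-‖z‖ ^ 2 / 4)
  have hsplit : ∀ y : ℝ × EuclideanSpace ℝ (Fin k),
      Real.exp (-((x₁ - y.1) ^ 2 + ‖0 - y.2‖ ^ 2) / (4 * t)) * gaussianSlabDatum k M y =
        (4 * π) ^ (-(k : ℝ) / 2) * (f y.1 * g y.2) := by
    rintro ⟨y₁, y₂⟩
    by_cases hy : y₁ ∈ Icc M (M + 1)
    · simp only [gaussianSlabDatum, f, g, indicator_of_mem hy, zero_sub, norm_neg, neg_add,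
        add_div, Real.exp_add]
      ring
    · simp [gaussianSlabDatum, f, indicator_of_notMem hy]
  have hf : ∫ s, f s = ∫ y in M..(M + 1), Real.exp (-(x₁ - y) ^ 2 / (4 * t)) := by
    rw [MeasureTheory.integral_indicator measurableSet_Icc, integral_Icc_eq_integral_Ioc,
      integral_of_le (by linarith)]
  rw [heatSolutionProd, funext hsplit, MeasureTheory.integral_const_mul, Measure.volume_eq_prod,
    integral_prod_mul f g, hf]
  ring

/-- For `d = k + 1 ≥ 1`, `M > 0`, the heat solution `u_M` with initial datum
`u_{0M}` satisfies, for every `t > 0`,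
`u_M(t, x₀) ≥ (1/2) e^{(M - 1/4)/(4t)} u_M(t, 0)` where `x₀ = (1, 0, …, 0)`. -/
theorem heat_solution_slab_same_time_comparison
    (k : ℕ) (M : ℝ) (hM : 0 < M) :
    ∀ t : ℝ, 0 < t →
      (1 / 2) * Real.exp ((M - 1 / 4) / (4 * t)) *
          heatSolutionProd k (gaussianSlabDatum k M) t (0, 0) ≤
        heatSolutionProd k (gaussianSlabDatum k M) t (1, 0) := by
  intro t ht
  rw [heatSolutionProd_gaussianSlabDatum_axis, heatSolutionProd_gaussianSlabDatum_axis]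
  have hcomp := half_exp_mul_integral_gaussian_le_integral_shift ht hM.le
  simp only [zero_sub, neg_sq]
  set c := (4 * π * t) ^ (-((k : ℝ) + 1) / 2) * (4 * π) ^ (-(k : ℝ) / 2) *
    ∫ z : EuclideanSpace ℝ (Fin k), Real.exp (-‖z‖ ^ 2 / (4 * t)) * Real.exp (-‖z‖ ^ 2 / 4)
  have hc : 0 ≤ c := by positivity
  calc (1 / 2) * Real.exp ((M - 1 / 4) / (4 * t)) *
        (c * ∫ y in M..(M + 1), Real.exp (-y ^ 2 / (4 * t)))
      = c * ((1 / 2) * Real.exp ((M - 1 / 4) / (4 * t)) *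
          ∫ y in M..(M + 1), Real.exp (-y ^ 2 / (4 * t))) := by ring
    _ ≤ c * ∫ y in M..(M + 1), Real.exp (-(1 - y) ^ 2 / (4 * t)) := by gcongr
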